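/- arXiv:1402.1193 — 2 statements merged into one kernel-verified Lean document; each statement's English description precedes it below -/
import Mathlib

section
/- Let v be a classical solution of the extension system in ℝⁿ and suppose φ = (φ_i) and ψ = (ψ_i) are two classical solutions of the linearized system: y·Δw_i + a_i ∂_y w_i = 0 on ℝⁿ × (0,∞) and −lim_{y→0⁺} y^{a_i} ∂_y w_i(x,y) = d_{s_i} ∑_{j=1}^m ∂_{u_i u_j}H(v(x,0)) w_j(x,0) for all x ∈ ℝⁿ. Assume each φ_i never vanishes on ℝⁿ × [0,∞). Then the quotients σ_i := ψ_i/φ_i satisfy div(y^{a_i} φ_i² ∇σ_i) = 0 on ℝⁿ × (0,∞) (equivalently y φ_i Δσ_i + a_i φ_i ∂_y σ_i + 2y ∇φ_i·∇σ_i = 0) and −lim_{y→0⁺} y^{a_i} φ_i(x,y)² ∂_y σ_i(x,y) = d_{s_i} ∑_{j=1}^m ∂_{u_i u_j}H(v(x,0)) φ_i(x,0) φ_j(x,0) (σ_j(x,0) − σ_i(x,0)) for all x ∈ ℝⁿ. -/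
noncomputable section

open Real MeasureTheory Filter Set

/-- Points of the upper half-space model: `(x, y)` with `x : ℝⁿ`, `y : ℝ`. -/
abbrev Pt (n : ℕ) := (Fin n → ℝ) × ℝ

/-- The `k`-th horizontal coordinate direction. -/
def eX (n : ℕ) (k : Fin n) : Pt n := (Pi.single k 1, 0)

/-- The vertical coordinate direction. -/
def eY (n : ℕ) : Pt n := (0, 1)

/-- Directional (partial) derivative of `f` at `z` in direction `d`. -/
def pd (n : ℕ) (f : Pt n → ℝ) (d : Pt n) (z : Pt n) : ℝ := fderiv ℝ f z d

/-- Laplacian in all `n + 1` variables. -/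
def lap (n : ℕ) (f : Pt n → ℝ) (z : Pt n) : ℝ :=
  (∑ k : Fin n, pd n (fun w => pd n f (eX n k) w) (eX n k) z) +
    pd n (fun w => pd n f (eY n) w) (eY n) z

/-- Squared norm of the full gradient (in all `n + 1` variables). -/
def gradSq (n : ℕ) (f : Pt n → ℝ) (z : Pt n) : ℝ :=
  (∑ k : Fin n, (pd n f (eX n k) z) ^ 2) + (pd n f (eY n) z) ^ 2

/-- Squared norm of the horizontal gradient `∇ₓ f`. -/
def gradXSq (n : ℕ) (f : Pt n → ℝ) (z : Pt n) : ℝ :=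
  ∑ k : Fin n, (pd n f (eX n k) z) ^ 2

/-- The full gradient as a vector in `Pt n`. -/
def gradVec (n : ℕ) (f : Pt n → ℝ) (z : Pt n) : Pt n :=
  (fun k => pd n f (eX n k) z, pd n f (eY n) z)

/-- Euclidean inner product on `Pt n`. -/
def dotPt (n : ℕ) (z w : Pt n) : ℝ := (∑ k : Fin n, z.1 k * w.1 k) + z.2 * w.2

/-- Divergence (in all `n + 1` variables) of a vector field on `Pt n`. -/
def diverg (n : ℕ) (V : Pt n → Pt n) (z : Pt n) : ℝ :=
  (∑ k : Fin n, fderiv ℝ (fun w => (V w).1 k) z (eX n k)) +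
    fderiv ℝ (fun w => (V w).2) z (eY n)

/-- Euclidean norm of `x : ℝⁿ`. -/
def radNorm (n : ℕ) (x : Fin n → ℝ) : ℝ := Real.sqrt (∑ k : Fin n, (x k) ^ 2)

/-- The normalizing constant `d_s = Γ(1-s) / (2^(2s-1) Γ(s))`. -/
def dCoef (s : ℝ) : ℝ := Real.Gamma (1 - s) / ((2 : ℝ) ^ (2 * s - 1) * Real.Gamma s)

/-- First partial derivative `∂_{u_i} H`. -/
def H1 (m : ℕ) (H : (Fin m → ℝ) → ℝ) (i : Fin m) (u : Fin m → ℝ) : ℝ :=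
  fderiv ℝ H u (Pi.single i 1)

/-- Second partial derivative `∂_{u_i u_j} H`. -/
def H2 (m : ℕ) (H : (Fin m → ℝ) → ℝ) (i j : Fin m) (u : Fin m → ℝ) : ℝ :=
  fderiv ℝ (fun w => fderiv ℝ H w (Pi.single i 1)) u (Pi.single j 1)

/-- Open upper half-space `ℝⁿ × (0, ∞)`. -/
def upperHalf (n : ℕ) : Set (Pt n) := {z : Pt n | 0 < z.2}

/-- Closed upper half-space `ℝⁿ × [0, ∞)`. -/
def cUpperHalf (n : ℕ) : Set (Pt n) := {z : Pt n | 0 ≤ z.2}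

/-- Half ball `B_R⁺ = {(x,y) : |x|² + y² < R², y > 0}`. -/
def BPlus (n : ℕ) (R : ℝ) : Set (Pt n) :=
  {z : Pt n | radNorm n z.1 ^ 2 + z.2 ^ 2 < R ^ 2 ∧ 0 < z.2}

/-- Ball `B_R ⊂ ℝⁿ`. -/
def ballX (n : ℕ) (R : ℝ) : Set (Fin n → ℝ) := {x | radNorm n x < R}

/-- Cylinder `C_R = B_R × (0, R)`. -/
def CylR (n : ℕ) (R : ℝ) : Set (Pt n) :=
  {z : Pt n | radNorm n z.1 < R ∧ z.2 ∈ Set.Ioo (0 : ℝ) R}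

/-- `v` is a classical solution of the extension system
`div(y^{a_i} ∇ v_i) = 0` in `ℝⁿ × (0,∞)`,
`-lim_{y→0⁺} y^{a_i} ∂_y v_i = d_{s_i} ∂_{u_i} H(v(·,0))` on `ℝⁿ`, with `a_i = 1 - 2 s_i`. -/
structure ExtSol (n m : ℕ) (s : Fin m → ℝ) (H : (Fin m → ℝ) → ℝ)
    (v : Fin m → Pt n → ℝ) : Prop where
  s_mem : ∀ i, s i ∈ Set.Ioo (0 : ℝ) 1
  H_smooth : ContDiff ℝ 2 H
  cont : ∀ i, ContinuousOn (v i) (cUpperHalf n)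
  smooth : ∀ i, ContDiffOn ℝ 2 (v i) (upperHalf n)
  interior : ∀ i, ∀ z : Pt n, 0 < z.2 →
    z.2 * lap n (v i) z + (1 - 2 * s i) * pd n (v i) (eY n) z = 0
  boundary : ∀ i, ∀ x : Fin n → ℝ,
    Tendsto (fun y : ℝ => y ^ (1 - 2 * s i) * pd n (v i) (eY n) (x, y))
      (nhdsWithin 0 (Set.Ioi 0))
      (nhds (-(dCoef (s i) * H1 m H i (fun j => v j (x, 0)))))

/-- `v` is bounded on the closed half-space. -/
def BoundedSol (n m : ℕ) (v : Fin m → Pt n → ℝ) : Prop :=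
  ∀ i, ∃ C : ℝ, ∀ z : Pt n, 0 ≤ z.2 → |v i z| ≤ C

/-- Pointwise stability of a solution `v` of the extension system. -/
def PointwiseStable (n m : ℕ) (s : Fin m → ℝ) (H : (Fin m → ℝ) → ℝ)
    (v : Fin m → Pt n → ℝ) : Prop :=
  ∃ φ : Fin m → Pt n → ℝ,
    (∀ i, ContinuousOn (φ i) (cUpperHalf n)) ∧
    (∀ i, ContDiffOn ℝ 2 (φ i) (upperHalf n)) ∧
    (∀ i, (∀ z : Pt n, 0 ≤ z.2 → 0 < φ i z) ∨ (∀ z : Pt n, 0 ≤ z.2 → φ i z < 0)) ∧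
    (∀ i, ∀ z : Pt n, 0 < z.2 →
      z.2 * lap n (φ i) z + (1 - 2 * s i) * pd n (φ i) (eY n) z = 0) ∧
    (∀ i, ∀ x : Fin n → ℝ,
      Tendsto (fun y : ℝ => y ^ (1 - 2 * s i) * pd n (φ i) (eY n) (x, y))
        (nhdsWithin 0 (Set.Ioi 0))
        (nhds (-(dCoef (s i) *
          ∑ j, H2 m H i j (fun k => v k (x, 0)) * φ j (x, 0))))) ∧
    (∀ i j : Fin m, i < j → ∀ x : Fin n → ℝ,
      0 ≤ H2 m H i j (fun k => v k (x, 0)) * φ i (x, 0) * φ j (x, 0))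

/-- The index of the last horizontal coordinate `x_n`. -/
def lastX (n : ℕ) (hn : 0 < n) : Fin n := ⟨n - 1, Nat.sub_lt hn Nat.one_pos⟩

/-- `v` is `H`-monotone: each `v_i` is strictly monotone in `x_n` and the mixed
second derivatives of `H` have the compatible signs. -/
def HMonotone (n m : ℕ) (hn : 0 < n) (H : (Fin m → ℝ) → ℝ)
    (v : Fin m → Pt n → ℝ) : Prop :=
  (∀ i, (∀ z : Pt n, 0 ≤ z.2 → 0 < pd n (v i) (eX n (lastX n hn)) z) ∨
        (∀ z : Pt n, 0 ≤ z.2 → pd n (v i) (eX n (lastX n hn)) z < 0)) ∧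
  (∀ i j : Fin m, i < j → ∀ x : Fin n → ℝ,
    0 ≤ H2 m H i j (fun k => v k (x, 0)) *
        pd n (v i) (eX n (lastX n hn)) (x, 0) *
        pd n (v j) (eX n (lastX n hn)) (x, 0))

/-- Orientability of the system along `v`. -/
def Orientable (n m : ℕ) (H : (Fin m → ℝ) → ℝ) (v : Fin m → Pt n → ℝ) : Prop :=
  ∃ θ : Fin m → (Fin n → ℝ) → ℝ,
    (∀ k, Continuous (θ k)) ∧
    (∀ k, ∃ x, θ k x ≠ 0) ∧
    (∀ k, (∀ x, 0 ≤ θ k x) ∨ (∀ x, θ k x ≤ 0)) ∧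
    (∀ i j : Fin m, i < j → ∀ x : Fin n → ℝ,
      0 ≤ H2 m H i j (fun l => v l (x, 0)) * θ i x * θ j x)

/-- The stability inequality for `v`. -/
def StabIneq (n m : ℕ) (s : Fin m → ℝ) (H : (Fin m → ℝ) → ℝ)
    (v : Fin m → Pt n → ℝ) : Prop :=
  ∀ ζ : Fin m → Pt n → ℝ, (∀ i, ContDiff ℝ 1 (ζ i)) → (∀ i, HasCompactSupport (ζ i)) →
    (∑ i, ∑ j, ∫ x : Fin n → ℝ,
        Real.sqrt (dCoef (s i) * dCoef (s j)) * H2 m H i j (fun k => v k (x, 0)) *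
          ζ i (x, 0) * ζ j (x, 0)) ≤
      ∑ i, ∫ z in upperHalf n, z.2 ^ (1 - 2 * s i) * gradSq n (ζ i) z

/-- Layer solution of the extension system in dimension `n = 1`. -/
def LayerSol (m : ℕ) (s : Fin m → ℝ) (H : (Fin m → ℝ) → ℝ)
    (v : Fin m → Pt 1 → ℝ) (α β : Fin m → ℝ) : Prop :=
  ExtSol 1 m s H v ∧ BoundedSol 1 m v ∧
  (∀ i, (∀ z : Pt 1, 0 ≤ z.2 → 0 ≤ pd 1 (v i) (eX 1 0) z) ∨
        (∀ z : Pt 1, 0 ≤ z.2 → pd 1 (v i) (eX 1 0) z ≤ 0)) ∧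
  (∀ i, ∀ y : ℝ, 0 ≤ y →
    Tendsto (fun t : ℝ => v i (fun _ => t, y)) atTop (nhds (α i))) ∧
  (∀ i, ∀ y : ℝ, 0 ≤ y →
    Tendsto (fun t : ℝ => v i (fun _ => t, y)) atBot (nhds (β i)))

/-- `w` is a classical solution of the linearized extension system at `v`. -/
def LinSol (n m : ℕ) (s : Fin m → ℝ) (H : (Fin m → ℝ) → ℝ)
    (v w : Fin m → Pt n → ℝ) : Prop :=
  (∀ i, ContinuousOn (w i) (cUpperHalf n)) ∧
  (∀ i, ContDiffOn ℝ 2 (w i) (upperHalf n)) ∧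
  (∀ i, ∀ z : Pt n, 0 < z.2 →
    z.2 * lap n (w i) z + (1 - 2 * s i) * pd n (w i) (eY n) z = 0) ∧
  (∀ i, ∀ x : Fin n → ℝ,
    Tendsto (fun y : ℝ => y ^ (1 - 2 * s i) * pd n (w i) (eY n) (x, y))
      (nhdsWithin 0 (Set.Ioi 0))
      (nhds (-(dCoef (s i) * ∑ j, H2 m H i j (fun k => v k (x, 0)) * w j (x, 0)))))

/-! Writing `ψ = φ σ`, the product rule gives
`y Δψ + a ∂_y ψ = σ (y Δφ + a ∂_y φ) + y φ Δσ + a φ ∂_y σ + 2 y ∇φ·∇σ`, and the first term on the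
right vanishes because `φ` solves the same equation as `ψ`. On the boundary,
`y^a φ² ∂_y σ = φ · y^a ∂_y ψ - ψ · y^a ∂_y φ`, and the limits of the two weighted fluxes combine
into the stated Neumann condition, since `∑ⱼ Hᵢⱼ (φᵢ ψⱼ - ψᵢ φⱼ) = ∑ⱼ Hᵢⱼ φᵢ φⱼ (σⱼ - σᵢ)`. -/

open scoped Topology

lemma isOpen_upperHalf (n : ℕ) : IsOpen (upperHalf n) :=
  isOpen_Ioi.preimage continuous_snd

lemma tendsto_vertical_of_continuousOn {n : ℕ} {f : Pt n → ℝ}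
    (hf : ContinuousOn f (cUpperHalf n)) (x : Fin n → ℝ) :
    Tendsto (fun y : ℝ => f (x, y)) (𝓝[>] 0) (𝓝 (f (x, 0))) := by
  have hpath : Tendsto (fun y : ℝ => ((x, y) : Pt n)) (𝓝[>] 0) (𝓝[cUpperHalf n] (x, 0)) :=
    tendsto_nhdsWithin_of_tendsto_nhds_of_eventually_within _
      ((Continuous.prodMk_right x).tendsto' 0 _ rfl |>.mono_left nhdsWithin_le_nhds)
      (eventually_nhdsWithin_of_forall fun y (hy : 0 < y) => show (0 : ℝ) ≤ y from hy.le)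
  exact (hf (x, 0) (le_refl (0 : ℝ))).tendsto.comp hpath

section PartialDerivatives

variable {n : ℕ} {f g : Pt n → ℝ} {z : Pt n}

lemma pd_congr_of_eventuallyEq (h : f =ᶠ[𝓝 z] g) (d : Pt n) : pd n f d z = pd n g d z := by
  rw [pd, pd, h.fderiv_eq]

lemma lap_congr_of_eventuallyEq (h : f =ᶠ[𝓝 z] g) : lap n f z = lap n g z := by
  have hpd : ∀ d, (fun w => pd n f d w) =ᶠ[𝓝 z] fun w => pd n g d w := fun d =>
    h.eventuallyEq_nhds.mono fun _ hw => pd_congr_of_eventuallyEq hw d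
  simp only [lap, pd_congr_of_eventuallyEq (hpd _)]

lemma pd_add (hf : DifferentiableAt ℝ f z) (hg : DifferentiableAt ℝ g z) (d : Pt n) :
    pd n (fun w => f w + g w) d z = pd n f d z + pd n g d z := by
  simp [pd, fderiv_fun_add hf hg]

lemma pd_mul (hf : DifferentiableAt ℝ f z) (hg : DifferentiableAt ℝ g z) (d : Pt n) :
    pd n (fun w => f w * g w) d z = f z * pd n g d z + g z * pd n f d z := by
  simp [pd, fderiv_fun_mul hf hg]

lemma ContDiffAt.differentiableAt_pd (hf : ContDiffAt ℝ 2 f z) (d : Pt n) :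
    DifferentiableAt ℝ (fun w => pd n f d w) z :=
  ((hf.fderiv_right one_add_one_eq_two.le).differentiableAt one_ne_zero).clm_apply
    (differentiableAt_const d)

lemma pd_pd_mul (hf : ContDiffAt ℝ 2 f z) (hg : ContDiffAt ℝ 2 g z) (d : Pt n) :
    pd n (fun w => pd n (fun u => f u * g u) d w) d z =
      f z * pd n (fun w => pd n g d w) d z + g z * pd n (fun w => pd n f d w) d z +
        2 * (pd n f d z * pd n g d z) := by
  have hf₁ := hf.differentiableAt two_ne_zero
  have hg₁ := hg.differentiableAt two_ne_zero
  have hprod : (fun w => pd n (fun u => f u * g u) d w) =ᶠ[𝓝 z]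
      fun w => f w * pd n g d w + g w * pd n f d w := by
    filter_upwards [hf.eventually (by simp), hg.eventually (by simp)] with w hfw hgw
    exact pd_mul (hfw.differentiableAt two_ne_zero) (hgw.differentiableAt two_ne_zero) d
  rw [pd_congr_of_eventuallyEq hprod,
    pd_add (f := fun w => f w * pd n g d w) (g := fun w => g w * pd n f d w)
      (hf₁.mul (hg.differentiableAt_pd d)) (hg₁.mul (hf.differentiableAt_pd d)),
    pd_mul hf₁ (hg.differentiableAt_pd d), pd_mul hg₁ (hf.differentiableAt_pd d)]
  ring

lemma lap_mul (hf : ContDiffAt ℝ 2 f z) (hg : ContDiffAt ℝ 2 g z) :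
    lap n (fun w => f w * g w) z =
      f z * lap n g z + g z * lap n f z + 2 * dotPt n (gradVec n f z) (gradVec n g z) := by
  simp only [lap, dotPt, gradVec, pd_pd_mul hf hg, Finset.sum_add_distrib, ← Finset.mul_sum]
  ring

lemma eventuallyEq_mul_div (hf : ContinuousAt f z) (hz : f z ≠ 0) :
    g =ᶠ[𝓝 z] fun w => f w * (g w / f w) :=
  (hf.eventually_ne hz).mono fun _ hw => (mul_div_cancel₀ _ hw).symm

lemma sq_mul_pd_div (hf : DifferentiableAt ℝ f z) (hg : DifferentiableAt ℝ g z) (hz : f z ≠ 0)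
    (d : Pt n) :
    f z ^ 2 * pd n (fun w => g w / f w) d z = f z * pd n g d z - g z * pd n f d z := by
  have hq : DifferentiableAt ℝ (fun w => g w / f w) z := by fun_prop (disch := exact hz)
  rw [pd_congr_of_eventuallyEq (eventuallyEq_mul_div (g := g) hf.continuousAt hz) d,
    pd_mul hf hq d]
  field_simp
  ring

end PartialDerivatives

theorem quotient_eq_of_extension_eq {n : ℕ} {a : ℝ} {φ ψ : Pt n → ℝ} {z : Pt n}
    (hφ : ContDiffAt ℝ 2 φ z) (hψ : ContDiffAt ℝ 2 ψ z) (hz : φ z ≠ 0)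
    (hφeq : z.2 * lap n φ z + a * pd n φ (eY n) z = 0)
    (hψeq : z.2 * lap n ψ z + a * pd n ψ (eY n) z = 0) :
    z.2 * φ z * lap n (fun w => ψ w / φ w) z + a * φ z * pd n (fun w => ψ w / φ w) (eY n) z +
      2 * z.2 * dotPt n (gradVec n φ z) (gradVec n (fun w => ψ w / φ w) z) = 0 := by
  have hσ : ContDiffAt ℝ 2 (fun w => ψ w / φ w) z := hψ.div hφ hz
  have hψσ := eventuallyEq_mul_div (g := ψ) hφ.continuousAt hz
  rw [lap_congr_of_eventuallyEq hψσ, lap_mul hφ hσ, pd_congr_of_eventuallyEq hψσ,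
    pd_mul (hφ.differentiableAt two_ne_zero) (hσ.differentiableAt two_ne_zero)] at hψeq
  linear_combination hψeq - ψ z / φ z * hφeq

theorem tendsto_weighted_flux_div {n : ℕ} {a φ₀ ψ₀ Lφ Lψ : ℝ} {φ ψ : Pt n → ℝ}
    {x : Fin n → ℝ} (hφd : ∀ y : ℝ, 0 < y → DifferentiableAt ℝ φ (x, y))
    (hψd : ∀ y : ℝ, 0 < y → DifferentiableAt ℝ ψ (x, y))
    (hne : ∀ y : ℝ, 0 < y → φ (x, y) ≠ 0)
    (hφ₀ : Tendsto (fun y : ℝ => φ (x, y)) (𝓝[>] 0) (𝓝 φ₀))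
    (hψ₀ : Tendsto (fun y : ℝ => ψ (x, y)) (𝓝[>] 0) (𝓝 ψ₀))
    (hLφ : Tendsto (fun y : ℝ => y ^ a * pd n φ (eY n) (x, y)) (𝓝[>] 0) (𝓝 Lφ))
    (hLψ : Tendsto (fun y : ℝ => y ^ a * pd n ψ (eY n) (x, y)) (𝓝[>] 0) (𝓝 Lψ)) :
    Tendsto (fun y : ℝ => y ^ a * φ (x, y) ^ 2 * pd n (fun w => ψ w / φ w) (eY n) (x, y))
      (𝓝[>] 0) (𝓝 (φ₀ * Lψ - ψ₀ * Lφ)) := by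
  refine ((hφ₀.mul hLψ).sub (hψ₀.mul hLφ)).congr' ?_
  filter_upwards [self_mem_nhdsWithin] with y (hy : 0 < y)
  rw [mul_assoc, sq_mul_pd_div (hφd y hy) (hψd y hy) (hne y hy)]
  ring

lemma neg_mul_sum_mul_div_sub {ι : Type*} [Fintype ι] (c : ℝ) (A p q : ι → ℝ) (i : ι)
    (hp : ∀ j, p j ≠ 0) :
    -(c * ∑ j, A j * p i * p j * (q j / p j - q i / p i)) =
      p i * -(c * ∑ j, A j * q j) - q i * -(c * ∑ j, A j * p j) := by
  have hterm : ∀ j, A j * p i * p j * (q j / p j - q i / p i) =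
      p i * (A j * q j) - q i * (A j * p j) := fun j => by
    field_simp [hp i, hp j]
  simp only [hterm, Finset.sum_sub_distrib, ← Finset.mul_sum]
  ring

theorem stmt3_general (n m : ℕ) (s : Fin m → ℝ) (H : (Fin m → ℝ) → ℝ)
    (v φ ψ : Fin m → Pt n → ℝ)
    (hφ : LinSol n m s H v φ) (hψ : LinSol n m s H v ψ)
    (hnz : ∀ i, ∀ z : Pt n, 0 ≤ z.2 → φ i z ≠ 0) :
    (∀ i, ∀ z : Pt n, 0 < z.2 →
      z.2 * φ i z * lap n (fun w => ψ i w / φ i w) z +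
        (1 - 2 * s i) * φ i z * pd n (fun w => ψ i w / φ i w) (eY n) z +
        2 * z.2 *
          ((∑ k : Fin n,
              pd n (φ i) (eX n k) z * pd n (fun w => ψ i w / φ i w) (eX n k) z) +
            pd n (φ i) (eY n) z * pd n (fun w => ψ i w / φ i w) (eY n) z) = 0) ∧
    (∀ i, ∀ x : Fin n → ℝ,
      Tendsto (fun y : ℝ => y ^ (1 - 2 * s i) * (φ i (x, y)) ^ 2 *
          pd n (fun w => ψ i w / φ i w) (eY n) (x, y))
        (nhdsWithin 0 (Set.Ioi 0))
        (nhds (-(dCoef (s i) *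
          ∑ j, H2 m H i j (fun k => v k (x, 0)) * φ i (x, 0) * φ j (x, 0) *
            (ψ j (x, 0) / φ j (x, 0) - ψ i (x, 0) / φ i (x, 0)))))) := by
  obtain ⟨hφc, hφ₂, hφeq, hφflux⟩ := hφ
  obtain ⟨hψc, hψ₂, hψeq, hψflux⟩ := hψ
  have hcontDiffAt : ∀ {f : Pt n → ℝ}, ContDiffOn ℝ 2 f (upperHalf n) → ∀ z : Pt n, 0 < z.2 →
      ContDiffAt ℝ 2 f z := fun hf z hz => hf.contDiffAt ((isOpen_upperHalf n).mem_nhds hz)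
  refine ⟨fun i z hz => ?_, fun i x => ?_⟩
  · exact quotient_eq_of_extension_eq (hcontDiffAt (hφ₂ i) z hz) (hcontDiffAt (hψ₂ i) z hz) (hnz i z hz.le)
      (hφeq i z hz) (hψeq i z hz)
  · rw [neg_mul_sum_mul_div_sub _ _ (fun j => φ j (x, 0)) _ i fun j => hnz j (x, 0) le_rfl]
    exact tendsto_weighted_flux_div
      (fun y hy => (hcontDiffAt (hφ₂ i) (x, y) hy).differentiableAt two_ne_zero)
      (fun y hy => (hcontDiffAt (hψ₂ i) (x, y) hy).differentiableAt two_ne_zero)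
      (fun y hy => hnz i (x, y) hy.le) (tendsto_vertical_of_continuousOn (hφc i) x)
      (tendsto_vertical_of_continuousOn (hψc i) x) (hφflux i x) (hψflux i x)

/-- the quotient `σ_i = ψ_i / φ_i` of two solutions of the linearized system
(with `φ_i` nonvanishing) satisfies `div(y^{a_i} φ_i² ∇σ_i) = 0` together with the
corresponding weighted Neumann boundary condition. -/
theorem stmt3 (n m : ℕ) (s : Fin m → ℝ) (H : (Fin m → ℝ) → ℝ)
    (v φ ψ : Fin m → Pt n → ℝ)
    (hsol : ExtSol n m s H v)
    (hφ : LinSol n m s H v φ) (hψ : LinSol n m s H v ψ)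
    (hnz : ∀ i, ∀ z : Pt n, 0 ≤ z.2 → φ i z ≠ 0) :
    (∀ i, ∀ z : Pt n, 0 < z.2 →
      z.2 * φ i z * lap n (fun w => ψ i w / φ i w) z +
        (1 - 2 * s i) * φ i z * pd n (fun w => ψ i w / φ i w) (eY n) z +
        2 * z.2 *
          ((∑ k : Fin n,
              pd n (φ i) (eX n k) z * pd n (fun w => ψ i w / φ i w) (eX n k) z) +
            pd n (φ i) (eY n) z * pd n (fun w => ψ i w / φ i w) (eY n) z) = 0) ∧
    (∀ i, ∀ x : Fin n → ℝ,
      Tendsto (fun y : ℝ => y ^ (1 - 2 * s i) * (φ i (x, y)) ^ 2 *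
          pd n (fun w => ψ i w / φ i w) (eY n) (x, y))
        (nhdsWithin 0 (Set.Ioi 0))
        (nhds (-(dCoef (s i) *
          ∑ j, H2 m H i j (fun k => v k (x, 0)) * φ i (x, 0) * φ j (x, 0) *
            (ψ j (x, 0) / φ j (x, 0) - ψ i (x, 0) / φ i (x, 0)))))) :=
  stmt3_general n m s H v φ ψ hφ hψ hnz
end
end

section
/- Let m ≥ 1, let d_1,…,d_m be positive reals, φ_1,…,φ_m nonzero reals, ζ_1,…,ζ_m reals, and let (h_{ij})_{1≤i,j≤m} be a symmetric real matrix such that h_{ij} φ_i φ_j ≥ 0 whenever i ≠ j. Then ∑_{i,j=1}^m d_i h_{ij} (φ_j/φ_i) ζ_i² ≥ ∑_{i,j=1}^m √(d_i d_j) h_{ij} ζ_i ζ_j. -/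
noncomputable section

open Real MeasureTheory Filter Set

/-! Symmetrising the double sums, it suffices to compare the `(i, j)` and `(j, i)` terms together.
With `u = ζ i / φ i` and `w = ζ j / φ j`, their difference is
`h i j φ i φ j (√(d i) u - √(d j) w) ^ 2`, which is nonnegative by the sign condition on `h`. -/

theorem Finset.sum_sum_le_sum_sum_of_add_swap_le {ι α : Type*} [Fintype ι]
    [AddCommMonoid α] [LinearOrder α] [IsOrderedCancelAddMonoid α] {f g : ι → ι → α}
    (hfg : ∀ i j, f i j + f j i ≤ g i j + g j i) :
    ∑ i, ∑ j, f i j ≤ ∑ i, ∑ j, g i j := by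
  have hswap : ∀ F : ι → ι → α, ∑ i, ∑ j, (F i j + F j i) = (∑ i, ∑ j, F i j) + ∑ i, ∑ j, F i j :=
    fun F => by simp only [Finset.sum_add_distrib]; rw [Finset.sum_comm (f := fun i j => F j i)]
  have hdouble : (∑ i, ∑ j, f i j) + ∑ i, ∑ j, f i j ≤ (∑ i, ∑ j, g i j) + ∑ i, ∑ j, g i j := by
    rw [← hswap, ← hswap]
    exact Finset.sum_le_sum fun i _ => Finset.sum_le_sum fun j _ => hfg i j
  by_contra! hlt
  exact hdouble.not_gt (add_lt_add hlt hlt)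

theorem Real.two_mul_sqrt_mul_mul_le {a b p q k x y : ℝ} (ha : 0 ≤ a) (hb : 0 ≤ b)
    (hp : p ≠ 0) (hq : q ≠ 0) (hk : 0 ≤ k * p * q) :
    2 * (√(a * b) * k * x * y) ≤ a * k * (q / p) * x ^ 2 + b * k * (p / q) * y ^ 2 := by
  obtain ⟨s, hs, rfl⟩ : ∃ s, 0 ≤ s ∧ a = s ^ 2 := ⟨√a, sqrt_nonneg a, (sq_sqrt ha).symm⟩
  obtain ⟨t, ht, rfl⟩ : ∃ t, 0 ≤ t ∧ b = t ^ 2 := ⟨√b, sqrt_nonneg b, (sq_sqrt hb).symm⟩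
  have hst : √(s ^ 2 * t ^ 2) = s * t := by
    rw [← mul_pow, sqrt_sq (mul_nonneg hs ht)]
  have hgap : s ^ 2 * k * (q / p) * x ^ 2 + t ^ 2 * k * (p / q) * y ^ 2 - 2 * (s * t * k * x * y)
      = k * p * q * (s * (x / p) - t * (y / q)) ^ 2 := by
    field_simp
    ring
  rw [hst]
  linarith [mul_nonneg hk (sq_nonneg (s * (x / p) - t * (y / q)))]

theorem stmt18_general (m : ℕ) (d φ ζ : Fin m → ℝ) (h : Fin m → Fin m → ℝ)
    (hd : ∀ i, 0 < d i) (hφ : ∀ i, φ i ≠ 0)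
    (hsym : ∀ i j, h i j = h j i)
    (hoff : ∀ i j, i ≠ j → 0 ≤ h i j * φ i * φ j) :
    (∑ i, ∑ j, Real.sqrt (d i * d j) * h i j * ζ i * ζ j) ≤
      ∑ i, ∑ j, d i * h i j * (φ j / φ i) * ζ i ^ 2 := by
  refine Finset.sum_sum_le_sum_sum_of_add_swap_le fun i j => ?_
  rcases eq_or_ne i j with rfl | hij
  · rw [Real.sqrt_mul_self (hd i).le, div_self (hφ i)]
    exact le_of_eq (by ring)
  · have hpair := Real.two_mul_sqrt_mul_mul_le (x := ζ i) (y := ζ j)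
      (hd i).le (hd j).le (hφ i) (hφ j) (hoff i j hij)
    rw [hsym j i, mul_comm (d j) (d i)]
    linarith

/-- the algebraic inequality underlying the stability inequality. -/
theorem stmt18 (m : ℕ) (hm : 0 < m) (d φ ζ : Fin m → ℝ) (h : Fin m → Fin m → ℝ)
    (hd : ∀ i, 0 < d i) (hφ : ∀ i, φ i ≠ 0)
    (hsym : ∀ i j, h i j = h j i)
    (hoff : ∀ i j, i ≠ j → 0 ≤ h i j * φ i * φ j) :
    (∑ i, ∑ j, Real.sqrt (d i * d j) * h i j * ζ i * ζ j) ≤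
      ∑ i, ∑ j, d i * h i j * (φ j / φ i) * ζ i ^ 2 :=
  stmt18_general m d φ ζ h hd hφ hsym hoff
end
end
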